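/- arXiv:2408.07241 — 3 statements merged into one kernel-verified Lean document; each statement's English description precedes it below -/
import Mathlib

section
/- Uniform Gronwall lemma: Let c₁, c₂, g₀ > 0 and F₁, F₂ ≥ 0 be constants. Let y : [0,∞) → [0,∞) be differentiable with y(0) = y₀ and y′(t) + c₁ y(t) ≤ F₁ + F(t) for all t ≥ 0, where F : [0,∞) → [0,∞) is locally integrable and satisfies ∫_t^{t+1} F(s) ds ≤ g₀ e^{−c₂ t} + F₂ for all t ≥ 0. Then, with c = min{c₁, c₂}, y(t) ≤ y₀ e^{−c₁ t} + g₀ e^{c₁+c}(t+1) e^{−c t} + F₁/c₁ + (e^{c₁}/(1−e^{−c₁})) F₂ for all t ≥ 0. -/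
open MeasureTheory Real

private lemma exp_mul_integrableOn {c₁ : ℝ} {F : ℝ → ℝ} {a b : ℝ}
    (hF : IntegrableOn F (Set.Icc a b)) (hc : 0 ≤ c₁) :
    IntegrableOn (fun s => Real.exp (c₁ * s) * F s) (Set.Icc a b) := by
  apply Integrable.mono' (hF.norm.const_mul (Real.exp (c₁ * b)))
  · exact ((Real.continuous_exp.comp (continuous_const.mul continuous_id)).aestronglyMeasurable).mul
      hF.aestronglyMeasurable
  · filter_upwards [ae_restrict_mem measurableSet_Icc] with s hs
    rw [norm_mul, Real.norm_eq_abs (Real.exp _), abs_of_pos (Real.exp_pos _)]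
    exact mul_le_mul_of_nonneg_right
      (Real.exp_le_exp.mpr (mul_le_mul_of_nonneg_left hs.2 hc)) (norm_nonneg _)

/-- **Uniform Gronwall lemma.** If `y ≥ 0` on `[0,∞)` satisfies
`y′(t) + c₁ y(t) ≤ F₁ + F(t)` with `y(0) = y₀`, where `F ≥ 0` is locally integrable and
`∫_t^{t+1} F ≤ g₀ e^{−c₂ t} + F₂` for all `t ≥ 0`, then with `c = min c₁ c₂`,
`y(t) ≤ y₀ e^{−c₁ t} + g₀ e^{c₁+c}(t+1) e^{−c t} + F₁/c₁ + (e^{c₁}/(1−e^{−c₁})) F₂`. -/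
theorem uniform_gronwall
    (c₁ c₂ g₀ F₁ F₂ y₀ : ℝ)
    (hc₁ : 0 < c₁) (hc₂ : 0 < c₂) (hg₀ : 0 < g₀) (hF₁ : 0 ≤ F₁) (hF₂ : 0 ≤ F₂)
    (y y' F : ℝ → ℝ)
    (hy₀ : y 0 = y₀)
    (hy_nonneg : ∀ t, 0 ≤ t → 0 ≤ y t)
    (hy_deriv : ∀ t, 0 ≤ t → HasDerivAt y (y' t) t)
    (hF_nonneg : ∀ t, 0 ≤ t → 0 ≤ F t)
    (hF_loc : ∀ t, 0 ≤ t → IntegrableOn F (Set.Icc t (t + 1)))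
    (hdiff_ineq : ∀ t, 0 ≤ t → y' t + c₁ * y t ≤ F₁ + F t)
    (hF_int : ∀ t, 0 ≤ t → (∫ s in t..(t + 1), F s) ≤ g₀ * Real.exp (-c₂ * t) + F₂) :
    ∀ t, 0 ≤ t →
      y t ≤ y₀ * Real.exp (-c₁ * t)
        + g₀ * Real.exp (c₁ + min c₁ c₂) * (t + 1) * Real.exp (-(min c₁ c₂) * t)
        + F₁ / c₁ + (Real.exp c₁ / (1 - Real.exp (-c₁))) * F₂ := by
  intro t ht
  set c := min c₁ c₂ with hc_def
  have hc_pos : 0 < c := lt_min hc₁ hc₂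
  have hc_le : c ≤ c₁ := min_le_left _ _
  have hc_le' : c ≤ c₂ := min_le_right _ _
  set n := ⌈t⌉₊ with hn_def
  have htn : t ≤ (n : ℝ) := Nat.le_ceil t
  have hnt : (n : ℝ) ≤ t + 1 := (Nat.ceil_lt_add_one ht).le
  -- integrability of F on [0, m]
  have hFnat : ∀ m : ℕ, IntegrableOn F (Set.Icc 0 (m : ℝ)) := by
    intro m
    induction m with
    | zero =>
      exact (hF_loc 0 le_rfl).mono_set (by norm_num [Set.Icc_subset_Icc_iff])
    | succ m ih =>
      have h1 : Set.Icc (0:ℝ) ((m:ℝ)+1) = Set.Icc 0 (m:ℝ) ∪ Set.Icc (m:ℝ) ((m:ℝ)+1) :=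
        (Set.Icc_union_Icc_eq_Icc (Nat.cast_nonneg m) (by linarith)).symm
      rw [Nat.cast_succ, h1]
      exact ih.union (hF_loc m (Nat.cast_nonneg m))
  have hF0t : IntegrableOn F (Set.Icc 0 t) := (hFnat n).mono_set (Set.Icc_subset_Icc le_rfl htn)
  -- derivative of exp (c₁ * ·)
  have hexp : ∀ x : ℝ, HasDerivAt (fun s => Real.exp (c₁ * s)) (Real.exp (c₁ * x) * c₁) x := by
    intro x
    have hlin : HasDerivAt (fun s : ℝ => c₁ * s) c₁ x := by
      simpa using (hasDerivAt_id x).const_mul c₁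
    exact (Real.hasDerivAt_exp (c₁ * x)).comp x hlin
  -- key Gronwall step
  have hGint : IntegrableOn (fun s => Real.exp (c₁ * s) * (F₁ + F s)) (Set.Icc 0 t) := by
    have h1 : IntegrableOn (fun s => F₁ + F s) (Set.Icc 0 t) :=
      (integrableOn_const measure_Icc_lt_top.ne).add hF0t
    exact exp_mul_integrableOn h1 hc₁.le
  have key : Real.exp (c₁ * t) * y t - Real.exp (c₁ * 0) * y 0
      ≤ ∫ s in (0:ℝ)..t, Real.exp (c₁ * s) * (F₁ + F s) := by
    apply intervalIntegral.sub_le_integral_of_hasDeriv_right_of_le ht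
      (g' := fun s => Real.exp (c₁ * s) * (y' s + c₁ * y s))
    · intro s hs
      exact ((Real.continuous_exp.comp
        (continuous_const.mul continuous_id)).continuousAt.continuousWithinAt).mul
        ((hy_deriv s hs.1).continuousAt.continuousWithinAt)
    · intro x hx
      have h := (hexp x).mul (hy_deriv x hx.1.le)
      have heq : Real.exp (c₁ * x) * c₁ * y x + Real.exp (c₁ * x) * y' x
          = Real.exp (c₁ * x) * (y' x + c₁ * y x) := by ring
      rw [heq] at h
      exact h.hasDerivWithinAt
    · exact hGint
    · intro x hx
      exact mul_le_mul_of_nonneg_left (hdiff_ineq x hx.1.le) (Real.exp_nonneg _)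
  -- split the integral
  have hint1 : IntervalIntegrable (fun s => Real.exp (c₁ * s) * F₁) volume 0 t :=
    ((Real.continuous_exp.comp (continuous_const.mul continuous_id)).mul
      continuous_const).intervalIntegrable 0 t
  have hint2 : IntervalIntegrable (fun s => Real.exp (c₁ * s) * F s) volume 0 t := by
    rw [intervalIntegrable_iff_integrableOn_Icc_of_le ht]
    exact exp_mul_integrableOn hF0t hc₁.le
  have hsplit : (∫ s in (0:ℝ)..t, Real.exp (c₁ * s) * (F₁ + F s))
      = (∫ s in (0:ℝ)..t, Real.exp (c₁ * s) * F₁)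
        + ∫ s in (0:ℝ)..t, Real.exp (c₁ * s) * F s := by
    rw [← intervalIntegral.integral_add hint1 hint2]
    congr 1
    ext s
    ring
  -- value of the first integral
  have hI1 : (∫ s in (0:ℝ)..t, Real.exp (c₁ * s) * F₁)
      = F₁ / c₁ * Real.exp (c₁ * t) - F₁ / c₁ * Real.exp (c₁ * 0) := by
    apply intervalIntegral.integral_eq_sub_of_hasDerivAt
    · intro x _
      have h := (hexp x).const_mul (F₁ / c₁)
      have heq : F₁ / c₁ * (Real.exp (c₁ * x) * c₁) = Real.exp (c₁ * x) * F₁ := by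
        field_simp
      rwa [heq] at h
    · exact hint1
  -- bound the second integral by the sum over unit intervals
  have hunit : ∀ k : ℕ, IntervalIntegrable (fun s => Real.exp (c₁ * s) * F s) volume
      (k : ℝ) ((k : ℝ) + 1) := by
    intro k
    rw [intervalIntegrable_iff_integrableOn_Icc_of_le (by linarith)]
    exact exp_mul_integrableOn (hF_loc k (Nat.cast_nonneg k)) hc₁.le
  have hIn : IntervalIntegrable (fun s => Real.exp (c₁ * s) * F s) volume 0 (n : ℝ) := by
    rw [intervalIntegrable_iff_integrableOn_Icc_of_le (le_trans ht htn)]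
    exact exp_mul_integrableOn (hFnat n) hc₁.le
  have hI2a : (∫ s in (0:ℝ)..t, Real.exp (c₁ * s) * F s)
      ≤ ∫ s in (0:ℝ)..(n:ℝ), Real.exp (c₁ * s) * F s := by
    apply intervalIntegral.integral_mono_interval le_rfl ht htn _ hIn
    filter_upwards [ae_restrict_mem measurableSet_Ioc] with s hs
    exact mul_nonneg (Real.exp_nonneg _) (hF_nonneg s hs.1.le)
  have hI2b : (∫ s in (0:ℝ)..(n:ℝ), Real.exp (c₁ * s) * F s)
      = ∑ k ∈ Finset.range n, ∫ s in (k:ℝ)..((k:ℝ)+1), Real.exp (c₁ * s) * F s := by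
    have h := intervalIntegral.sum_integral_adjacent_intervals (μ := volume)
      (a := fun k : ℕ => (k:ℝ)) (f := fun s => Real.exp (c₁ * s) * F s) (n := n)
      (fun k _ => by push_cast; exact hunit k)
    simp only [Nat.cast_zero, Nat.cast_add, Nat.cast_one] at h
    exact h.symm
  have hI2c : ∀ k : ℕ, (∫ s in (k:ℝ)..((k:ℝ)+1), Real.exp (c₁ * s) * F s)
      ≤ Real.exp (c₁ * ((k:ℝ)+1)) * (g₀ * Real.exp (-c₂ * k) + F₂) := by
    intro k
    have h2 : (∫ s in (k:ℝ)..((k:ℝ)+1), Real.exp (c₁ * ((k:ℝ)+1)) * F s)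
        = Real.exp (c₁ * ((k:ℝ)+1)) * ∫ s in (k:ℝ)..((k:ℝ)+1), F s :=
      intervalIntegral.integral_const_mul _ _
    have h1 : (∫ s in (k:ℝ)..((k:ℝ)+1), Real.exp (c₁ * s) * F s)
        ≤ ∫ s in (k:ℝ)..((k:ℝ)+1), Real.exp (c₁ * ((k:ℝ)+1)) * F s := by
      apply intervalIntegral.integral_mono_on (by linarith) (hunit k)
      · rw [intervalIntegrable_iff_integrableOn_Icc_of_le (by linarith)]
        exact (hF_loc k (Nat.cast_nonneg k)).const_mul _
      · intro s hs
        exact mul_le_mul_of_nonneg_right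
          (Real.exp_le_exp.mpr (mul_le_mul_of_nonneg_left hs.2 hc₁.le))
          (hF_nonneg s (le_trans (Nat.cast_nonneg k) hs.1))
    calc (∫ s in (k:ℝ)..((k:ℝ)+1), Real.exp (c₁ * s) * F s)
        ≤ Real.exp (c₁ * ((k:ℝ)+1)) * ∫ s in (k:ℝ)..((k:ℝ)+1), F s := by rw [← h2]; exact h1
      _ ≤ Real.exp (c₁ * ((k:ℝ)+1)) * (g₀ * Real.exp (-c₂ * k) + F₂) :=
          mul_le_mul_of_nonneg_left (hF_int k (Nat.cast_nonneg k)) (Real.exp_nonneg _)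
  have hSum : (∫ s in (0:ℝ)..t, Real.exp (c₁ * s) * F s)
      ≤ ∑ k ∈ Finset.range n, Real.exp (c₁ * ((k:ℝ)+1)) * (g₀ * Real.exp (-c₂ * k) + F₂) := by
    rw [hI2b] at hI2a
    exact le_trans hI2a (Finset.sum_le_sum fun k _ => hI2c k)
  -- split the sum
  have hS_split : (∑ k ∈ Finset.range n, Real.exp (c₁ * ((k:ℝ)+1)) * (g₀ * Real.exp (-c₂ * k) + F₂))
      = (∑ k ∈ Finset.range n, g₀ * Real.exp (c₁ * ((k:ℝ)+1) + -c₂ * k))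
        + ∑ k ∈ Finset.range n, F₂ * Real.exp (c₁ * ((k:ℝ)+1)) := by
    rw [← Finset.sum_add_distrib]
    apply Finset.sum_congr rfl
    intro k _
    rw [Real.exp_add]
    ring
  -- bound the g₀-part of the sum
  have hg_part : (∑ k ∈ Finset.range n, g₀ * Real.exp (c₁ * ((k:ℝ)+1) + -c₂ * k))
      ≤ g₀ * Real.exp (c₁ + c) * (t + 1) * Real.exp ((c₁ - c) * t) := by
    have hterm : ∀ k ∈ Finset.range n, g₀ * Real.exp (c₁ * ((k:ℝ)+1) + -c₂ * k)
        ≤ g₀ * Real.exp (c₁ + (c₁ - c) * t) := by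
      intro k hk
      have hkt : (k : ℝ) < t := Nat.lt_ceil.mp (Finset.mem_range.mp hk)
      apply mul_le_mul_of_nonneg_left _ hg₀.le
      apply Real.exp_le_exp.mpr
      have h1 : (c₁ - c₂) * k ≤ (c₁ - c) * k :=
        mul_le_mul_of_nonneg_right (by linarith) (Nat.cast_nonneg k)
      have h2 : (c₁ - c) * k ≤ (c₁ - c) * t :=
        mul_le_mul_of_nonneg_left hkt.le (by linarith)
      nlinarith
    calc (∑ k ∈ Finset.range n, g₀ * Real.exp (c₁ * ((k:ℝ)+1) + -c₂ * k))
        ≤ ∑ _k ∈ Finset.range n, g₀ * Real.exp (c₁ + (c₁ - c) * t) :=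
          Finset.sum_le_sum hterm
      _ = (n : ℝ) * (g₀ * Real.exp (c₁ + (c₁ - c) * t)) := by
          rw [Finset.sum_const, Finset.card_range]; push_cast; ring
      _ ≤ (t + 1) * (g₀ * Real.exp (c₁ + (c₁ - c) * t)) := by
          apply mul_le_mul_of_nonneg_right hnt
          positivity
      _ = g₀ * Real.exp c₁ * Real.exp ((c₁ - c) * t) * (t + 1) := by
          rw [Real.exp_add]; ring
      _ ≤ g₀ * Real.exp (c₁ + c) * Real.exp ((c₁ - c) * t) * (t + 1) := by
          have h1 : Real.exp c₁ ≤ Real.exp (c₁ + c) := Real.exp_le_exp.mpr (by linarith)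
          have h0 : (0:ℝ) ≤ t + 1 := by linarith
          exact mul_le_mul_of_nonneg_right (mul_le_mul_of_nonneg_right
            (mul_le_mul_of_nonneg_left h1 hg₀.le) (Real.exp_nonneg _)) h0
      _ = g₀ * Real.exp (c₁ + c) * (t + 1) * Real.exp ((c₁ - c) * t) := by ring
  -- bound the F₂-part of the sum
  have hr0 : (0:ℝ) ≤ Real.exp (-c₁) := Real.exp_nonneg _
  have hr1 : Real.exp (-c₁) < 1 := Real.exp_lt_one_iff.mpr (by linarith)
  have hf_part : (∑ k ∈ Finset.range n, F₂ * Real.exp (c₁ * ((k:ℝ)+1)))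
      ≤ Real.exp c₁ / (1 - Real.exp (-c₁)) * F₂ * Real.exp (c₁ * t) := by
    have hterm : ∀ k ∈ Finset.range n, F₂ * Real.exp (c₁ * ((k:ℝ)+1))
        ≤ F₂ * Real.exp (c₁ * t) * Real.exp c₁ * Real.exp (-c₁) ^ (n - 1 - k) := by
      intro k hk
      have hk' : k < n := Finset.mem_range.mp hk
      have hcast : ((n - 1 - k : ℕ) : ℝ) = (n : ℝ) - 1 - k := by
        have h : n - 1 - k = n - (k + 1) := by omega
        rw [h, Nat.cast_sub hk']
        push_cast
        ring
      have hpow : Real.exp (-c₁) ^ (n - 1 - k) = Real.exp (((n:ℝ) - 1 - k) * (-c₁)) := by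
        rw [← Real.exp_nat_mul, hcast]
      rw [hpow]
      have hkn : (k:ℝ) + 1 ≤ (n:ℝ) := by exact_mod_cast hk'
      have hexp_le : Real.exp (c₁ * ((k:ℝ)+1))
          ≤ Real.exp (c₁ * t + c₁ + ((n:ℝ) - 1 - k) * (-c₁)) := by
        apply Real.exp_le_exp.mpr
        nlinarith [mul_le_mul_of_nonneg_left hnt hc₁.le]
      calc F₂ * Real.exp (c₁ * ((k:ℝ)+1))
          ≤ F₂ * Real.exp (c₁ * t + c₁ + ((n:ℝ) - 1 - k) * (-c₁)) :=
            mul_le_mul_of_nonneg_left hexp_le hF₂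
        _ = F₂ * Real.exp (c₁ * t) * Real.exp c₁ * Real.exp (((n:ℝ) - 1 - k) * (-c₁)) := by
            rw [Real.exp_add, Real.exp_add]; ring
    calc (∑ k ∈ Finset.range n, F₂ * Real.exp (c₁ * ((k:ℝ)+1)))
        ≤ ∑ k ∈ Finset.range n,
            F₂ * Real.exp (c₁ * t) * Real.exp c₁ * Real.exp (-c₁) ^ (n - 1 - k) :=
          Finset.sum_le_sum hterm
      _ = F₂ * Real.exp (c₁ * t) * Real.exp c₁
            * ∑ k ∈ Finset.range n, Real.exp (-c₁) ^ (n - 1 - k) := by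
          rw [Finset.mul_sum]
      _ = F₂ * Real.exp (c₁ * t) * Real.exp c₁
            * ∑ j ∈ Finset.range n, Real.exp (-c₁) ^ j := by
          rw [Finset.sum_range_reflect (fun j => Real.exp (-c₁) ^ j) n]
      _ ≤ F₂ * Real.exp (c₁ * t) * Real.exp c₁ * (1 - Real.exp (-c₁))⁻¹ := by
          apply mul_le_mul_of_nonneg_left _ (by positivity)
          have hsum := Summable.sum_le_tsum (Finset.range n)
            (fun j _ => pow_nonneg hr0 j) (summable_geometric_of_lt_one hr0 hr1)
          rwa [tsum_geometric_of_lt_one hr0 hr1] at hsum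
      _ = Real.exp c₁ / (1 - Real.exp (-c₁)) * F₂ * Real.exp (c₁ * t) := by
          rw [div_eq_mul_inv]; ring
  -- assemble everything
  have hE : (0:ℝ) < Real.exp (c₁ * t) := Real.exp_pos _
  have e1 : Real.exp (c₁ * t) * Real.exp (-c₁ * t) = 1 := by
    rw [← Real.exp_add, show c₁ * t + -c₁ * t = 0 by ring, Real.exp_zero]
  have e2 : Real.exp (c₁ * t) * Real.exp (-c * t) = Real.exp ((c₁ - c) * t) := by
    rw [← Real.exp_add]
    congr 1
    ring
  have key' : Real.exp (c₁ * t) * y t - y₀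
      ≤ (F₁ / c₁ * Real.exp (c₁ * t) - F₁ / c₁)
        + ∫ s in (0:ℝ)..t, Real.exp (c₁ * s) * F s := by
    rw [hsplit, hI1] at key
    simp only [mul_zero, Real.exp_zero, one_mul, hy₀] at key
    linarith
  have hF₁c : 0 ≤ F₁ / c₁ := div_nonneg hF₁ hc₁.le
  rw [← mul_le_mul_iff_right₀ hE]
  have target_eq : Real.exp (c₁ * t) * (y₀ * Real.exp (-c₁ * t)
        + g₀ * Real.exp (c₁ + c) * (t + 1) * Real.exp (-c * t)
        + F₁ / c₁ + Real.exp c₁ / (1 - Real.exp (-c₁)) * F₂)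
      = y₀ * (Real.exp (c₁ * t) * Real.exp (-c₁ * t))
        + g₀ * Real.exp (c₁ + c) * (t + 1) * (Real.exp (c₁ * t) * Real.exp (-c * t))
        + F₁ / c₁ * Real.exp (c₁ * t)
        + Real.exp c₁ / (1 - Real.exp (-c₁)) * F₂ * Real.exp (c₁ * t) := by ring
  rw [target_eq, e1, e2]
  have hchain : (∫ s in (0:ℝ)..t, Real.exp (c₁ * s) * F s)
      ≤ g₀ * Real.exp (c₁ + c) * (t + 1) * Real.exp ((c₁ - c) * t)
        + Real.exp c₁ / (1 - Real.exp (-c₁)) * F₂ * Real.exp (c₁ * t) := by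
    rw [hS_split] at hSum
    linarith
  linarith
end

section
/- Energy dissipation identity for the charge density and total concentration: Let (c₁,…,c_N, Φ, p, u) be a nonnegative classical NPD solution on [0,T]. Then for every t ∈ [0,T], (1/2) (d/dt)(‖ρ(t)‖²_{L²} + z²‖σ(t)‖²_{L²}) + D(‖∇ρ(t)‖²_{L²} + z²‖∇σ(t)‖²_{L²} + z² ∫_{𝕋³} ρ(x,t)² σ(x,t) dx) = −D z² ∫_{𝕋³} ρ(x,t) ρ̃(x) σ(x,t) dx. -/
open MeasureTheory Real

noncomputable section

/-- points of 3-space -/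
abbrev E3 := Fin 3 → ℝ

/-- the period cell `[0,2π]³` of the torus `𝕋³` -/
def T3 : Set E3 := Set.Icc 0 (fun _ => 2 * π)

/-- `f` is `2π`-periodic in each coordinate -/
def Per (f : E3 → ℝ) : Prop :=
  ∀ (x : E3) (k : Fin 3 → ℤ), f (x + fun i => 2 * π * (k i : ℝ)) = f x

/-- partial derivative in the `i`-th coordinate direction -/
def pd (i : Fin 3) (f : E3 → ℝ) : E3 → ℝ := fun x => fderiv ℝ f x (Pi.single i 1)

/-- Laplacian -/
def lap (f : E3 → ℝ) : E3 → ℝ := fun x => ∑ i, pd i (pd i f) x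

/-- spatial average over the torus -/
def avg (f : E3 → ℝ) : ℝ := (∫ x in T3, f x) / (2 * π) ^ 3

/-- squared Sobolev `H^k` norm: `Σ_{j ≤ k} Σ_{directions} ‖∂^α f‖²_{L²}`
(each order-`j` derivative counted with its multinomial multiplicity) -/
def sobSq (k : ℕ) (f : E3 → ℝ) : ℝ :=
  ∑ j ∈ Finset.range (k + 1), ∑ m : Fin j → Fin 3,
    ∫ x in T3, (iteratedFDeriv ℝ j f x (fun l => Pi.single (m l) 1)) ^ 2

/-- A classical solution of the Nernst–Planck–Darcy system on the time interval `I`,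
with `N` species, diffusivity `D`, valences `zv`, and time-independent body charge `ρt`:
smooth periodic functions `c i` (ionic concentrations), `Φ` (electric potential),
`pr` (pressure) and smooth periodic vector field `u` (fluid velocity) satisfying
the Nernst–Planck equations, the Poisson equation `−ΔΦ = ρ + ρ̃`, Darcy's law
`u + ∇p = −(ρ+ρ̃)∇Φ` with `∇·u = 0`, and the Leray normalization
`∫ u = −∫ (ρ+ρ̃)∇Φ` (i.e. `u = −ℙ((ρ+ρ̃)∇Φ)`). -/
def IsNPD (N : ℕ) (D : ℝ) (zv : Fin N → ℝ) (ρt : E3 → ℝ) (I : Set ℝ)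
    (c : Fin N → ℝ → E3 → ℝ) (Φ pr : ℝ → E3 → ℝ) (u : ℝ → E3 → E3) : Prop :=
  (∀ i, ContDiff ℝ (⊤ : ℕ∞) (Function.uncurry (c i))) ∧
  ContDiff ℝ (⊤ : ℕ∞) (Function.uncurry Φ) ∧
  ContDiff ℝ (⊤ : ℕ∞) (Function.uncurry pr) ∧
  (∀ j, ContDiff ℝ (⊤ : ℕ∞) (fun q : ℝ × E3 => u q.1 q.2 j)) ∧
  (∀ i t, Per (c i t)) ∧ (∀ t, Per (Φ t)) ∧ (∀ t, Per (pr t)) ∧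
  (∀ t j, Per (fun x => u t x j)) ∧
  -- Nernst–Planck equations: ∂ₜcᵢ + u·∇cᵢ − DΔcᵢ − zᵢD ∇·(cᵢ∇Φ) = 0
  (∀ i, ∀ t ∈ I, ∀ x,
    deriv (fun s => c i s x) t + (∑ j, u t x j * pd j (c i t) x)
      - D * lap (c i t) x
      - zv i * D * (∑ j, pd j (fun y => c i t y * pd j (Φ t) y) x) = 0) ∧
  -- Poisson equation: −ΔΦ = ρ + ρ̃
  (∀ t ∈ I, ∀ x, - lap (Φ t) x = (∑ i, zv i * c i t x) + ρt x) ∧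
  -- Darcy's law: u + ∇p = −(ρ+ρ̃)∇Φ
  (∀ t ∈ I, ∀ x j, u t x j + pd j (pr t) x
      = -((∑ i, zv i * c i t x) + ρt x) * pd j (Φ t) x) ∧
  -- incompressibility: ∇·u = 0
  (∀ t ∈ I, ∀ x, (∑ j, pd j (fun y => u t y j) x) = 0) ∧
  -- zero-mean normalization: u = −ℙ((ρ+ρ̃)∇Φ)
  (∀ t ∈ I, ∀ j, (∫ x in T3, u t x j)
      = -∫ x in T3, ((∑ i, zv i * c i t x) + ρt x) * pd j (Φ t) x)

/-- nonnegativity of the ionic concentrations -/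
def NPDNonneg {N : ℕ} (I : Set ℝ) (c : Fin N → ℝ → E3 → ℝ) : Prop :=
  ∀ i, ∀ t ∈ I, ∀ x, 0 ≤ c i t x


/-! ### Auxiliary lemmas -/

lemma intT3 {f : E3 → ℝ} (hf : Continuous f) : IntegrableOn f T3 :=
  hf.continuousOn.integrableOn_compact isCompact_Icc

lemma intT3_congr {f g : E3 → ℝ} (h : ∀ x, f x = g x) :
    ∫ x in T3, f x = ∫ x in T3, g x := by congr 1; exact funext h

lemma contDiff_slice {f : ℝ × E3 → ℝ} (hf : ContDiff ℝ (⊤ : ℕ∞) f) (t : ℝ) :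
    ContDiff ℝ (⊤ : ℕ∞) (fun x => f (t, x)) :=
  hf.comp (contDiff_const.prodMk contDiff_id)

lemma pd_contDiff {f : E3 → ℝ} (hf : ContDiff ℝ (⊤ : ℕ∞) f) (j : Fin 3) :
    ContDiff ℝ (⊤ : ℕ∞) (pd j f) := (hf.fderiv_right (m := (⊤ : ℕ∞)) (by simp)).clm_apply contDiff_const

lemma Per.pdP {f : E3 → ℝ} (hd : Differentiable ℝ f) (hf : Per f) (j : Fin 3) :
    Per (pd j f) := by
  intro x k
  set v : E3 := fun i => 2 * π * (k i : ℝ) with hv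
  have key : (fun y : E3 => f (y + v)) = f := by
    funext y; exact hf y k
  have h1 : HasFDerivAt (fun y : E3 => f (y + v)) (fderiv ℝ f (x + v)) x := by
    have := (hd (x + v)).hasFDerivAt
    have h2 : HasFDerivAt (fun y : E3 => y + v) (ContinuousLinearMap.id ℝ E3) x :=
      (hasFDerivAt_id x).add_const v
    have h3 := this.comp x h2
    simp only [ContinuousLinearMap.comp_id] at h3
    exact h3
  rw [key] at h1
  have h3 : fderiv ℝ f (x + v) = fderiv ℝ f x := h1.fderiv.symm
  simp only [pd, h3]

lemma Per.sumP {ι : Type*} (s : Finset ι) (f : ι → E3 → ℝ) (hf : ∀ i ∈ s, Per (f i)) :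
    Per (fun x => ∑ i ∈ s, f i x) := by
  intro x k
  exact Finset.sum_congr rfl fun i hi => hf i hi x k

lemma npd_pd_mul {f g : E3 → ℝ} {x : E3} (hf : DifferentiableAt ℝ f x)
    (hg : DifferentiableAt ℝ g x) (j : Fin 3) :
    pd j (fun y => f y * g y) x = pd j f x * g x + f x * pd j g x := by
  simp only [pd, fderiv_fun_mul hf hg, ContinuousLinearMap.add_apply,
    ContinuousLinearMap.smul_apply, smul_eq_mul]
  ring

lemma npd_pd_sum {ι : Type*} (s : Finset ι) (f : ι → E3 → ℝ) {x : E3}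
    (hf : ∀ i ∈ s, DifferentiableAt ℝ (f i) x) (j : Fin 3) :
    pd j (fun y => ∑ i ∈ s, f i y) x = ∑ i ∈ s, pd j (f i) x := by
  simp only [pd, fderiv_fun_sum hf, ContinuousLinearMap.sum_apply]

lemma npd_pd_const_mul {f : E3 → ℝ} {x : E3} (hf : DifferentiableAt ℝ f x) (a : ℝ) (j : Fin 3) :
    pd j (fun y => a * f y) x = a * pd j f x := by
  simp only [pd, fderiv_const_mul hf a, ContinuousLinearMap.smul_apply, smul_eq_mul]

lemma integral_pd_zero {f : E3 → ℝ} (hf : ContDiff ℝ (⊤ : ℕ∞) f) (hp : Per f) (j : Fin 3) :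
    ∫ x in T3, pd j f x = 0 := by
  have hle : (0 : E3) ≤ (fun _ => 2 * π) := fun i => by positivity
  set a : E3 := 0 with ha
  set b : E3 := fun _ => 2 * π with hb
  set F : Fin 3 → E3 → ℝ := fun i => if i = j then f else 0 with hF
  set F' : Fin 3 → E3 → E3 →L[ℝ] ℝ := fun i x => if i = j then fderiv ℝ f x else 0 with hF'
  have key := MeasureTheory.integral_divergence_of_hasFDerivAt_off_countable'
    a b hle F F' ∅ Set.countable_empty
    (fun i => by
      by_cases h : i = j
      · simpa [hF, h] using (hf.continuous).continuousOn
      · simp [hF, h]; exact continuousOn_const)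
    (fun x _ i => by
      by_cases h : i = j
      · simpa [hF, hF', h] using (hf.differentiable (by simp) x).hasFDerivAt
      · simp [hF, hF', h]; exact hasFDerivAt_const (0 : ℝ) x)
    (by
      have : (fun x : E3 => ∑ i, F' i x (Pi.single i 1)) = pd j f := by
        funext x
        rw [Finset.sum_eq_single j (fun i _ h => by simp [hF', h])
          (fun h => absurd (Finset.mem_univ j) h)]
        have hFj : F' j x = fderiv ℝ f x := if_pos rfl
        rw [hFj]; rfl
      rw [this]
      exact intT3 (pd_contDiff hf j).continuous)
  have hdiv : (fun x : E3 => ∑ i, F' i x (Pi.single i 1)) = pd j f := by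
    funext x
    rw [Finset.sum_eq_single j (fun i _ h => by simp [hF', h])
      (fun h => absurd (Finset.mem_univ j) h)]
    have hFj : F' j x = fderiv ℝ f x := if_pos rfl
    rw [hFj]; rfl
  rw [hdiv] at key
  have hT3 : T3 = Set.Icc a b := rfl
  rw [hT3, key]
  apply Finset.sum_eq_zero
  intro i _
  by_cases h : i = j
  · subst h
    have hper : ∀ y : Fin 2 → ℝ, F i (Fin.insertNth i (b i) y) = F i (Fin.insertNth i (a i) y) := by
      intro y
      have hk := hp (Fin.insertNth i (a i) y) (Pi.single i 1)
      have hxy : (Fin.insertNth i (a i) y + fun m => 2 * π * ((Pi.single i 1 : Fin 3 → ℤ) m : ℝ))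
          = Fin.insertNth i (b i) y := by
        funext m
        refine Fin.succAboveCases i ?_ ?_ m
        · simp [ha, hb]
        · intro m'
          simp [Pi.single_eq_of_ne (Fin.succAbove_ne i m')]
      simp only [hF, if_pos rfl] at *
      rw [← hxy, hk]
    rw [show (∫ x in Set.Icc (a ∘ Fin.succAbove i) (b ∘ Fin.succAbove i),
          F i (Fin.insertNth i (b i) x))
        = ∫ x in Set.Icc (a ∘ Fin.succAbove i) (b ∘ Fin.succAbove i), F i (Fin.insertNth i (a i) x)
      from integral_congr_ae (Filter.Eventually.of_forall (fun x => hper x))]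
    ring
  · simp [hF, h]

lemma hasDerivAt_intT3 {G : ℝ × E3 → ℝ} (hG : ContDiff ℝ (⊤ : ℕ∞) G) (t : ℝ) :
    HasDerivAt (fun s => ∫ x in T3, G (s, x))
      (∫ x in T3, deriv (fun s => G (s, x)) t) t := by
  set G' : ℝ × E3 → ℝ := fun p => fderiv ℝ G p (1, 0) with hG'def
  have hG'cont : Continuous G' :=
    (hG.fderiv_right (m := (⊤ : ℕ∞)) (by simp)).continuous.clm_apply continuous_const
  have hslice : ∀ (s : ℝ) (x : E3), HasDerivAt (fun r => G (r, x)) (G' (s, x)) s := by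
    intro s x
    have h1 : HasFDerivAt G (fderiv ℝ G (s, x)) (s, x) :=
      (hG.differentiable (by simp) (s, x)).hasFDerivAt
    have h2 : HasDerivAt (fun r : ℝ => (r, x)) ((1 : ℝ), (0 : E3)) s :=
      (hasDerivAt_id s).prodMk (hasDerivAt_const s x)
    exact h1.comp_hasDerivAt s h2
  obtain ⟨C, hC⟩ : ∃ C, ∀ p ∈ (Set.Icc (t - 1) (t + 1) ×ˢ T3), ‖G' p‖ ≤ C :=
    (isCompact_Icc.prod isCompact_Icc).exists_bound_of_continuousOn hG'cont.continuousOn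
  have main := hasDerivAt_integral_of_dominated_loc_of_deriv_le
    (F := fun s x => G (s, x)) (F' := fun s x => G' (s, x))
    (μ := volume.restrict T3) (x₀ := t) (bound := fun _ => C)
    (s := Metric.ball t 1) (Metric.ball_mem_nhds t one_pos)
    (Filter.Eventually.of_forall fun s =>
      ((hG.continuous.comp (Continuous.prodMk_right s)).aestronglyMeasurable))
    (intT3 (hG.continuous.comp (Continuous.prodMk_right t)))
    ((hG'cont.comp (Continuous.prodMk_right t)).aestronglyMeasurable)
    (by
      filter_upwards [ae_restrict_mem measurableSet_Icc] with x hx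
      intro s hs
      apply hC
      refine Set.mk_mem_prod ?_ hx
      rw [Metric.mem_ball, Real.dist_eq] at hs
      constructor <;> [linarith [neg_abs_le (s - t)]; linarith [le_abs_self (s - t)]])
    (integrableOn_const isCompact_Icc.measure_lt_top.ne)
    (Filter.Eventually.of_forall fun x s _ => hslice s x)
  have heq : ∀ x : E3, deriv (fun s => G (s, x)) t = G' (t, x) := fun x => (hslice t x).deriv
  simpa only [heq] using main.2

lemma npd_ibp {f g : E3 → ℝ} (hf : ContDiff ℝ (⊤ : ℕ∞) f) (hg : ContDiff ℝ (⊤ : ℕ∞) g)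
    (hpf : Per f) (hpg : Per g) (j : Fin 3) :
    ∫ x in T3, pd j f x * g x = -∫ x in T3, f x * pd j g x := by
  have h0 := integral_pd_zero (hf.mul hg) (fun x k => by
    simp only [hpf x k, hpg x k]) j
  have hpt : ∀ x : E3, pd j (fun y => f y * g y) x = pd j f x * g x + f x * pd j g x :=
    fun x => npd_pd_mul (hf.differentiable (by simp) x) (hg.differentiable (by simp) x) j
  rw [show (fun x => pd j (fun y => f y * g y) x) = fun x => pd j f x * g x + f x * pd j g x
      from funext hpt] at h0
  rw [integral_add (intT3 (((pd_contDiff hf j).continuous).fun_mul hg.continuous))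
      (intT3 ((hf.continuous).fun_mul (pd_contDiff hg j).continuous))] at h0
  linarith

lemma npd_transport (uu : Fin 3 → E3 → ℝ) (W : E3 → ℝ)
    (hu : ∀ j, ContDiff ℝ (⊤ : ℕ∞) (uu j)) (hpu : ∀ j, Per (uu j))
    (hdiv : ∀ x, (∑ j, pd j (uu j) x) = 0)
    (hW : ContDiff ℝ (⊤ : ℕ∞) W) (hpW : Per W) :
    ∫ x in T3, W x * (∑ j, uu j x * pd j W x) = 0 := by
  have hW2 : ∀ (j : Fin 3) (x : E3), pd j (fun y => W y * W y) x = 2 * (W x * pd j W x) := by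
    intro j x
    rw [npd_pd_mul (hW.differentiable (by simp) x) (hW.differentiable (by simp) x) j]; ring
  have hcont : ∀ j : Fin 3, Continuous fun x => (1 / 2) * (pd j (fun y => W y * W y) x * uu j x) :=
    fun j => continuous_const.mul (((pd_contDiff (hW.mul hW) j).continuous).mul (hu j).continuous)
  have step1 : ∫ x in T3, W x * (∑ j, uu j x * pd j W x)
      = ∑ j, ∫ x in T3, (1 / 2) * (pd j (fun y => W y * W y) x * uu j x) := by
    rw [← integral_finset_sum _ (fun j _ => intT3 (hcont j))]
    apply intT3_congr
    intro x
    rw [Finset.mul_sum]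
    refine Finset.sum_congr rfl fun j _ => ?_
    rw [hW2 j x]; ring
  rw [step1]
  have step2 : ∀ j : Fin 3, ∫ x in T3, (1 / 2) * (pd j (fun y => W y * W y) x * uu j x)
      = (1 / 2) * -∫ x in T3, (W x * W x) * pd j (uu j) x := by
    intro j
    rw [integral_const_mul]
    congr 1
    exact npd_ibp (hW.mul hW) (hu j) (fun x k => by simp only [hpW x k]) (hpu j) j
  simp only [step2]
  rw [← Finset.mul_sum]
  have step3 : ∑ j : Fin 3, -∫ x in T3, (W x * W x) * pd j (uu j) x
      = -∫ x in T3, (W x * W x) * ∑ j, pd j (uu j) x := by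
    rw [Finset.sum_neg_distrib]
    congr 1
    rw [← integral_finset_sum _ (fun j _ => intT3 ((hW.continuous.fun_mul hW.continuous).fun_mul
        (pd_contDiff (hu j) j).continuous))]
    apply intT3_congr
    intro x
    rw [Finset.mul_sum]
  rw [step3]
  rw [intT3_congr (g := fun _ => (0:ℝ)) (fun x => by rw [hdiv x, mul_zero])]
  simp

lemma npd_lap_int (W : E3 → ℝ) (hW : ContDiff ℝ (⊤ : ℕ∞) W) (hpW : Per W) :
    ∫ x in T3, W x * lap W x = -∫ x in T3, ∑ j, (pd j W x) ^ 2 := by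
  have hcont : ∀ j : Fin 3, Continuous fun x => pd j (pd j W) x * W x :=
    fun j => ((pd_contDiff (pd_contDiff hW j) j).continuous).mul hW.continuous
  have step1 : ∫ x in T3, W x * lap W x = ∑ j, ∫ x in T3, pd j (pd j W) x * W x := by
    rw [← integral_finset_sum _ (fun j _ => intT3 (hcont j))]
    apply intT3_congr; intro x
    simp only [lap, Finset.mul_sum]
    exact Finset.sum_congr rfl fun j _ => mul_comm _ _
  rw [step1]
  have step2 : ∀ j : Fin 3, ∫ x in T3, pd j (pd j W) x * W x
      = -∫ x in T3, pd j W x * pd j W x := by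
    intro j
    exact npd_ibp (pd_contDiff hW j) hW (hpW.pdP (hW.differentiable (by simp)) j) hpW j
  simp only [step2]
  rw [Finset.sum_neg_distrib]
  congr 1
  rw [← integral_finset_sum _
    (fun j _ => intT3 ((pd_contDiff hW j).continuous.fun_mul (pd_contDiff hW j).continuous))]
  apply intT3_congr; intro x
  exact Finset.sum_congr rfl fun j _ => (sq (pd j W x)).symm

lemma npd_coupling (R S Φt ρf : E3 → ℝ)
    (hR : ContDiff ℝ (⊤ : ℕ∞) R) (hS : ContDiff ℝ (⊤ : ℕ∞) S) (hΦ : ContDiff ℝ (⊤ : ℕ∞) Φt)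
    (hρf : Continuous ρf)
    (hpR : Per R) (hpS : Per S) (hpΦ : Per Φt)
    (hPois : ∀ x, - lap Φt x = R x + ρf x) :
    ∫ x in T3, (R x * ∑ j, pd j (fun y => S y * pd j Φt y) x
        + S x * ∑ j, pd j (fun y => R y * pd j Φt y) x)
    = -(∫ x in T3, R x ^ 2 * S x) - ∫ x in T3, R x * ρf x * S x := by
  have hRd := hR.differentiable (by simp)
  have hSd := hS.differentiable (by simp)
  have hΦd := hΦ.differentiable (by simp)
  have hcSΦ : ∀ j : Fin 3, ContDiff ℝ (⊤ : ℕ∞) (fun y => S y * pd j Φt y) :=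
    fun j => hS.mul (pd_contDiff hΦ j)
  have hcRΦ : ∀ j : Fin 3, ContDiff ℝ (⊤ : ℕ∞) (fun y => R y * pd j Φt y) :=
    fun j => hR.mul (pd_contDiff hΦ j)
  have hpSΦ : ∀ j : Fin 3, Per (fun y => S y * pd j Φt y) :=
    fun j x k => by simp only [hpS x k, (hpΦ.pdP hΦd j) x k]
  have hpRΦ : ∀ j : Fin 3, Per (fun y => R y * pd j Φt y) :=
    fun j x k => by simp only [hpR x k, (hpΦ.pdP hΦd j) x k]
  have hRS : ContDiff ℝ (⊤ : ℕ∞) (fun y => R y * S y) := hR.mul hS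
  have hpRS : Per (fun y => R y * S y) := fun x k => by simp only [hpR x k, hpS x k]
  have step1 : ∫ x in T3, (R x * ∑ j, pd j (fun y => S y * pd j Φt y) x
        + S x * ∑ j, pd j (fun y => R y * pd j Φt y) x)
      = ∑ j : Fin 3, ∫ x in T3,
          (pd j (fun y => S y * pd j Φt y) x * R x + pd j (fun y => R y * pd j Φt y) x * S x) := by
    rw [← integral_finset_sum _ (fun j _ => intT3
      (((pd_contDiff (hcSΦ j) j).continuous.fun_mul hR.continuous).fun_add
       ((pd_contDiff (hcRΦ j) j).continuous.fun_mul hS.continuous)))]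
    apply intT3_congr; intro x
    rw [Finset.mul_sum, Finset.mul_sum, ← Finset.sum_add_distrib]
    exact Finset.sum_congr rfl fun j _ => by ring
  rw [step1]
  have step2 : ∀ j : Fin 3, ∫ x in T3,
      (pd j (fun y => S y * pd j Φt y) x * R x + pd j (fun y => R y * pd j Φt y) x * S x)
      = -∫ x in T3, pd j (fun y => R y * S y) x * pd j Φt x := by
    intro j
    rw [integral_add (intT3 ((pd_contDiff (hcSΦ j) j).continuous.fun_mul hR.continuous))
        (intT3 ((pd_contDiff (hcRΦ j) j).continuous.fun_mul hS.continuous))]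
    rw [npd_ibp (hcSΦ j) hR (hpSΦ j) hpR j, npd_ibp (hcRΦ j) hS (hpRΦ j) hpS j]
    rw [← neg_add, ← integral_add
      (intT3 ((hS.continuous.fun_mul (pd_contDiff hΦ j).continuous).fun_mul (pd_contDiff hR j).continuous))
      (intT3 ((hR.continuous.fun_mul (pd_contDiff hΦ j).continuous).fun_mul
        (pd_contDiff hS j).continuous))]
    congr 1
    apply intT3_congr; intro x
    rw [npd_pd_mul (hRd x) (hSd x) j]
    ring
  simp only [step2]
  have step3 : ∀ j : Fin 3, -∫ x in T3, pd j (fun y => R y * S y) x * pd j Φt x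
      = ∫ x in T3, (R x * S x) * pd j (pd j Φt) x := by
    intro j
    rw [npd_ibp hRS (pd_contDiff hΦ j) hpRS (hpΦ.pdP hΦd j) j, neg_neg]
  simp only [step3]
  rw [← integral_finset_sum _ (fun j _ => intT3 ((hR.continuous.fun_mul hS.continuous).fun_mul
      (pd_contDiff (pd_contDiff hΦ j) j).continuous))]
  have step4 : ∫ x in T3, ∑ j : Fin 3, (R x * S x) * pd j (pd j Φt) x
      = ∫ x in T3, (-(R x ^ 2 * S x) + -(R x * ρf x * S x)) := by
    apply intT3_congr; intro x
    rw [← Finset.mul_sum]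
    have : (∑ j : Fin 3, pd j (pd j Φt) x) = -(R x + ρf x) := by
      have := hPois x
      simp only [lap] at this
      linarith
    rw [this]; ring
  rw [step4, integral_add (intT3 (((hR.continuous.fun_pow 2).fun_mul hS.continuous).fun_neg))
    (intT3 (((hR.continuous.fun_mul hρf).fun_mul hS.continuous).fun_neg)), integral_neg, integral_neg]
  ring

lemma npd_spatial (D z : ℝ) (R S Φt ρf : E3 → ℝ) (uu : Fin 3 → E3 → ℝ)
    (hR : ContDiff ℝ (⊤ : ℕ∞) R) (hS : ContDiff ℝ (⊤ : ℕ∞) S) (hΦ : ContDiff ℝ (⊤ : ℕ∞) Φt)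
    (hρf : Continuous ρf)
    (hu : ∀ j, ContDiff ℝ (⊤ : ℕ∞) (uu j))
    (hpR : Per R) (hpS : Per S) (hpΦ : Per Φt) (hpu : ∀ j, Per (uu j))
    (hdiv : ∀ x, (∑ j, pd j (uu j) x) = 0)
    (hPois : ∀ x, - lap Φt x = R x + ρf x) :
    ∫ x in T3,
      (R x * (-(∑ j, uu j x * pd j R x) + D * lap R x
          + D * z ^ 2 * ∑ j, pd j (fun y => S y * pd j Φt y) x)
       + z ^ 2 * (S x * (-(∑ j, uu j x * pd j S x) + D * lap S x
          + D * ∑ j, pd j (fun y => R y * pd j Φt y) x)))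
    = - D * ((∫ x in T3, ∑ j, (pd j R x) ^ 2)
            + z ^ 2 * (∫ x in T3, ∑ j, (pd j S x) ^ 2)
            + z ^ 2 * ∫ x in T3, R x ^ 2 * S x)
      - D * z ^ 2 * ∫ x in T3, R x * ρf x * S x := by
  have cR := hR.continuous
  have cS := hS.continuous
  have cAR : Continuous fun x => R x * (∑ j, uu j x * pd j R x) :=
    cR.mul (continuous_finset_sum _ fun j _ => (hu j).continuous.mul (pd_contDiff hR j).continuous)
  have cAS : Continuous fun x => S x * (∑ j, uu j x * pd j S x) :=
    cS.mul (continuous_finset_sum _ fun j _ => (hu j).continuous.mul (pd_contDiff hS j).continuous)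
  have clapR : Continuous (lap R) :=
    continuous_finset_sum _ fun j _ => (pd_contDiff (pd_contDiff hR j) j).continuous
  have clapS : Continuous (lap S) :=
    continuous_finset_sum _ fun j _ => (pd_contDiff (pd_contDiff hS j) j).continuous
  have cPS : Continuous fun x => ∑ j, pd j (fun y => S y * pd j Φt y) x :=
    continuous_finset_sum _ fun j _ => (pd_contDiff (hS.mul (pd_contDiff hΦ j)) j).continuous
  have cPR : Continuous fun x => ∑ j, pd j (fun y => R y * pd j Φt y) x :=
    continuous_finset_sum _ fun j _ => (pd_contDiff (hR.mul (pd_contDiff hΦ j)) j).continuous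
  have c1 : Continuous fun x => -(R x * (∑ j, uu j x * pd j R x)) := cAR.neg
  have c2 : Continuous fun x => -(z ^ 2) * (S x * (∑ j, uu j x * pd j S x)) :=
    continuous_const.mul cAS
  have c3 : Continuous fun x => D * (R x * lap R x) := continuous_const.mul (cR.mul clapR)
  have c4 : Continuous fun x => z ^ 2 * D * (S x * lap S x) :=
    continuous_const.mul (cS.mul clapS)
  have c5 : Continuous fun x => D * z ^ 2 * (R x * ∑ j, pd j (fun y => S y * pd j Φt y) x
      + S x * ∑ j, pd j (fun y => R y * pd j Φt y) x) :=
    continuous_const.mul ((cR.mul cPS).add (cS.mul cPR))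
  have key : ∫ x in T3,
      (R x * (-(∑ j, uu j x * pd j R x) + D * lap R x
          + D * z ^ 2 * ∑ j, pd j (fun y => S y * pd j Φt y) x)
       + z ^ 2 * (S x * (-(∑ j, uu j x * pd j S x) + D * lap S x
          + D * ∑ j, pd j (fun y => R y * pd j Φt y) x)))
      = ∫ x in T3, (-(R x * (∑ j, uu j x * pd j R x))
          + (-(z ^ 2) * (S x * (∑ j, uu j x * pd j S x))
          + (D * (R x * lap R x)
          + (z ^ 2 * D * (S x * lap S x)
          + D * z ^ 2 * (R x * ∑ j, pd j (fun y => S y * pd j Φt y) x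
              + S x * ∑ j, pd j (fun y => R y * pd j Φt y) x))))) := by
    apply intT3_congr; intro x; ring
  rw [key, integral_add (intT3 c1) (intT3 (c2.fun_add (c3.fun_add (c4.fun_add c5)))),
    integral_add (intT3 c2) (intT3 (c3.fun_add (c4.fun_add c5))),
    integral_add (intT3 c3) (intT3 (c4.fun_add c5)),
    integral_add (intT3 c4) (intT3 c5),
    integral_neg, integral_const_mul, integral_const_mul, integral_const_mul, integral_const_mul]
  rw [npd_transport uu R hu hpu hdiv hR hpR, npd_transport uu S hu hpu hdiv hS hpS,
    npd_lap_int R hR hpR, npd_lap_int S hS hpS,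
    npd_coupling R S Φt ρf hR hS hΦ hρf hpR hpS hpΦ hPois]
  ring

lemma npd_pd_wsum {N : ℕ} (w : Fin N → ℝ) (cc : Fin N → E3 → ℝ)
    (hcc : ∀ i, Differentiable ℝ (cc i)) (j : Fin 3) (x : E3) :
    pd j (fun y => ∑ i, w i * cc i y) x = ∑ i, w i * pd j (cc i) x := by
  rw [npd_pd_sum Finset.univ (fun i y => w i * cc i y)
    (fun i _ => ((hcc i) x).const_mul (w i)) j]
  exact Finset.sum_congr rfl fun i _ => npd_pd_const_mul (hcc i x) (w i) j

lemma npd_lap_wsum {N : ℕ} (w : Fin N → ℝ) (cc : Fin N → E3 → ℝ)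
    (hcc : ∀ i, ContDiff ℝ (⊤ : ℕ∞) (cc i)) (x : E3) :
    lap (fun y => ∑ i, w i * cc i y) x = ∑ i, w i * lap (cc i) x := by
  simp only [lap]
  have hstep : ∀ j : Fin 3, pd j (pd j (fun y => ∑ i, w i * cc i y)) x
      = ∑ i, w i * pd j (pd j (cc i)) x := by
    intro j
    have hfun : pd j (fun y => ∑ i, w i * cc i y) = fun y => ∑ i, w i * pd j (cc i) y :=
      funext fun y => npd_pd_wsum w cc (fun i => (hcc i).differentiable (by simp)) j y
    rw [hfun, npd_pd_wsum w (fun i => pd j (cc i))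
      (fun i => (pd_contDiff (hcc i) j).differentiable (by simp)) j]
  simp only [hstep]
  rw [Finset.sum_comm]
  exact Finset.sum_congr rfl fun i _ => (Finset.mul_sum _ _ _).symm

/-- Pointwise combination of the Nernst–Planck equations with weights `w`. -/
lemma npd_sum_NP {N : ℕ} (D : ℝ) (zv : Fin N → ℝ) (cc : Fin N → E3 → ℝ) (Φt : E3 → ℝ)
    (uu : Fin 3 → E3 → ℝ) (dc : Fin N → E3 → ℝ)
    (hcc : ∀ i, ContDiff ℝ (⊤ : ℕ∞) (cc i)) (hΦt : ContDiff ℝ (⊤ : ℕ∞) Φt)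
    (hNP : ∀ i x, dc i x = -(∑ j, uu j x * pd j (cc i) x) + D * lap (cc i) x
        + zv i * D * (∑ j, pd j (fun y => cc i y * pd j Φt y) x))
    (w : Fin N → ℝ) (x : E3) :
    ∑ i, w i * dc i x
      = -(∑ j, uu j x * pd j (fun y => ∑ i, w i * cc i y) x)
        + D * lap (fun y => ∑ i, w i * cc i y) x
        + D * (∑ j, pd j (fun y => (∑ i, w i * zv i * cc i y) * pd j Φt y) x) := by
  have hccd : ∀ i, Differentiable ℝ (cc i) := fun i => (hcc i).differentiable (by simp)
  have expand : ∑ i, w i * dc i x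
      = -(∑ i, w i * (∑ j, uu j x * pd j (cc i) x))
        + D * (∑ i, w i * lap (cc i) x)
        + D * (∑ i, (w i * zv i) * (∑ j, pd j (fun y => cc i y * pd j Φt y) x)) := by
    simp only [hNP]
    rw [← Finset.sum_neg_distrib, Finset.mul_sum, Finset.mul_sum,
      ← Finset.sum_add_distrib, ← Finset.sum_add_distrib]
    exact Finset.sum_congr rfl fun i _ => by ring
  rw [expand]
  congr 1
  · congr 1
    · congr 1
      simp only [Finset.mul_sum]
      rw [Finset.sum_comm]
      refine Finset.sum_congr rfl fun j _ => ?_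
      rw [npd_pd_wsum w cc hccd j x, Finset.mul_sum]
      exact Finset.sum_congr rfl fun i _ => by ring
    · congr 1
      exact (npd_lap_wsum w cc hcc x).symm
  · congr 1
    simp only [Finset.mul_sum]
    rw [Finset.sum_comm]
    refine Finset.sum_congr rfl fun j _ => ?_
    have hfun : (fun y => (∑ i, w i * zv i * cc i y) * pd j Φt y)
        = fun y => ∑ i, (w i * zv i) * (cc i y * pd j Φt y) := by
      funext y
      rw [Finset.sum_mul]
      exact Finset.sum_congr rfl fun i _ => by ring
    rw [hfun, npd_pd_sum Finset.univ (fun i y => (w i * zv i) * (cc i y * pd j Φt y))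
      (fun i _ => (((hccd i) x).mul ((pd_contDiff hΦt j).differentiable (by simp) x)).const_mul
        (w i * zv i)) j]
    refine Finset.sum_congr rfl fun i _ => ?_
    rw [npd_pd_const_mul (((hccd i) x).fun_mul ((pd_contDiff hΦt j).differentiable (by simp) x))
      (w i * zv i) j]

/-- **Energy dissipation identity.** For a nonnegative classical NPD solution on `[0,T]`,
with `ρ = Σ zᵢcᵢ` and `σ = Σ cᵢ`,
`(1/2) d/dt (‖ρ‖²_{L²} + z²‖σ‖²_{L²})
  + D(‖∇ρ‖²_{L²} + z²‖∇σ‖²_{L²} + z²∫ρ²σ) = −Dz²∫ρρ̃σ` on `[0,T]`. -/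
theorem npd_energy_identity
    (N : ℕ) (hN : 1 ≤ N) (D : ℝ) (hD : 0 < D) (z : ℝ) (hz : 0 < z)
    (zv : Fin N → ℝ) (hzv : ∀ i, |zv i| = z)
    (ρt : E3 → ℝ) (hρt : ContDiff ℝ (⊤ : ℕ∞) ρt) (hρtp : Per ρt)
    (T : ℝ) (hT : 0 < T)
    (c : Fin N → ℝ → E3 → ℝ) (Φ pr : ℝ → E3 → ℝ) (u : ℝ → E3 → E3)
    (hsol : IsNPD N D zv ρt (Set.Icc 0 T) c Φ pr u)
    (hpos : NPDNonneg (Set.Icc 0 T) c) :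
    ∀ t ∈ Set.Icc (0 : ℝ) T,
      HasDerivAt
        (fun s => (1 / 2) * ((∫ x in T3, (∑ i, zv i * c i s x) ^ 2)
                              + z ^ 2 * ∫ x in T3, (∑ i, c i s x) ^ 2))
        (- D * ((∫ x in T3, ∑ j, (pd j (fun y => ∑ i, zv i * c i t y) x) ^ 2)
                + z ^ 2 * (∫ x in T3, ∑ j, (pd j (fun y => ∑ i, c i t y) x) ^ 2)
                + z ^ 2 * ∫ x in T3, (∑ i, zv i * c i t x) ^ 2 * (∑ i, c i t x))
         - D * z ^ 2 * ∫ x in T3, (∑ i, zv i * c i t x) * ρt x * (∑ i, c i t x)) t := by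
  obtain ⟨hc, hΦ, hpr, hu, hcper, hΦper, hprper, huper, hNP, hPois, hDarcy, hdivu, hnorm⟩ := hsol
  intro t ht
  -- smoothness of time slices
  have hci : ∀ i, ContDiff ℝ (⊤ : ℕ∞) (fun x => c i t x) := fun i => contDiff_slice (hc i) t
  have hΦt : ContDiff ℝ (⊤ : ℕ∞) (fun x => Φ t x) := contDiff_slice hΦ t
  have huj : ∀ j, ContDiff ℝ (⊤ : ℕ∞) (fun x => u t x j) := fun j => contDiff_slice (hu j) t
  have hR : ContDiff ℝ (⊤ : ℕ∞) (fun y => ∑ i, zv i * c i t y) :=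
    ContDiff.sum fun i _ => contDiff_const.mul (hci i)
  have hS : ContDiff ℝ (⊤ : ℕ∞) (fun y => ∑ i, c i t y) := ContDiff.sum fun i _ => hci i
  have hpR : Per (fun y => ∑ i, zv i * c i t y) :=
    Per.sumP Finset.univ _ (fun i _ x k => by
      rw [hcper i t x k])
  have hpS : Per (fun y => ∑ i, c i t y) :=
    Per.sumP Finset.univ _ (fun i _ x k => hcper i t x k)
  -- time derivatives of the concentrations
  have hdc : ∀ (i : Fin N) (x : E3), HasDerivAt (fun s => c i s x)
      (deriv (fun s => c i s x) t) t := by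
    intro i x
    have : ContDiff ℝ (⊤ : ℕ∞) (fun s : ℝ => c i s x) :=
      (hc i).comp ((contDiff_id : ContDiff ℝ (⊤ : ℕ∞) (id : ℝ → ℝ)).prodMk contDiff_const)
    exact ((this.differentiable (by simp)) t).hasDerivAt
  -- derivative of the two integrals
  have H1 := hasDerivAt_intT3
    (G := fun q : ℝ × E3 => (∑ i, zv i * c i q.1 q.2) ^ 2)
    ((ContDiff.sum fun i _ => contDiff_const.mul (hc i)).pow 2) t
  have H2 := hasDerivAt_intT3
    (G := fun q : ℝ × E3 => (∑ i, c i q.1 q.2) ^ 2)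
    ((ContDiff.sum fun (i : Fin N) _ => (hc i : ContDiff ℝ (⊤ : ℕ∞) (Function.uncurry (c i)))).pow 2) t
  have Hfinal := (H1.add (HasDerivAt.const_mul (z ^ 2) H2)).const_mul (1 / 2 : ℝ)
  -- identify the derivative value
  have hd1 : ∀ x : E3, deriv (fun s => (∑ i, zv i * c i s x) ^ 2) t
      = 2 * ((∑ i, zv i * c i t x) * (∑ i, zv i * deriv (fun s => c i s x) t)) := by
    intro x
    have hsum : HasDerivAt (fun s => ∑ i, zv i * c i s x)
        (∑ i, zv i * deriv (fun s => c i s x) t) t :=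
      HasDerivAt.fun_sum fun i _ => HasDerivAt.const_mul (zv i) (hdc i x)
    rw [(hsum.fun_pow 2).deriv]
    push_cast
    ring
  have hd2 : ∀ x : E3, deriv (fun s => (∑ i, c i s x) ^ 2) t
      = 2 * ((∑ i, c i t x) * (∑ i, deriv (fun s => c i s x) t)) := by
    intro x
    have hsum : HasDerivAt (fun s => ∑ i, c i s x)
        (∑ i, deriv (fun s => c i s x) t) t :=
      HasDerivAt.fun_sum fun i _ => hdc i x
    rw [(hsum.fun_pow 2).deriv]
    push_cast
    ring
  -- pointwise form of the NP equations
  have hderiv : ∀ (i : Fin N) (x : E3), deriv (fun s => c i s x) t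
      = -(∑ j, u t x j * pd j (fun y => c i t y) x)
        + D * lap (fun y => c i t y) x
        + zv i * D * (∑ j, pd j (fun y => c i t y * pd j (fun y' => Φ t y') y) x) := by
    intro i x
    have := hNP i t ht x
    linarith
  -- combine with weights
  have hRt : ∀ x : E3, ∑ i, zv i * deriv (fun s => c i s x) t
      = -(∑ j, u t x j * pd j (fun y => ∑ i, zv i * c i t y) x)
        + D * lap (fun y => ∑ i, zv i * c i t y) x
        + D * z ^ 2 * (∑ j, pd j (fun y => (∑ i, c i t y) * pd j (fun y' => Φ t y') y) x) := by
    intro x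
    rw [npd_sum_NP D zv (fun i y => c i t y) (fun y => Φ t y) (fun j y => u t y j)
      (fun i y => deriv (fun s => c i s y) t) hci hΦt hderiv zv x]
    congr 1
    have hzz : (fun y => ∑ i, zv i * zv i * c i t y) = fun y => z ^ 2 * ∑ i, c i t y := by
      funext y
      rw [Finset.mul_sum]
      refine Finset.sum_congr rfl fun i _ => ?_
      have : zv i * zv i = z ^ 2 := by
        rw [← abs_mul_abs_self (zv i), hzv i]; ring
      rw [this]
    have hstep : ∀ j : Fin 3, pd j (fun y => (∑ i, zv i * zv i * c i t y)
          * pd j (fun y' => Φ t y') y) x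
        = z ^ 2 * pd j (fun y => (∑ i, c i t y) * pd j (fun y' => Φ t y') y) x := by
      intro j
      have hfun : (fun y => (∑ i, zv i * zv i * c i t y) * pd j (fun y' => Φ t y') y)
          = fun y => z ^ 2 * ((∑ i, c i t y) * pd j (fun y' => Φ t y') y) := by
        funext y
        rw [show (∑ i, zv i * zv i * c i t y) = z ^ 2 * ∑ i, c i t y from congrFun hzz y]
        ring
      rw [hfun, npd_pd_const_mul ((hS.differentiable (by simp) x).fun_mul
        ((pd_contDiff hΦt j).differentiable (by simp) x)) (z ^ 2) j]
    simp only [hstep]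
    rw [← Finset.mul_sum]
    ring
  have hSt : ∀ x : E3, ∑ i, deriv (fun s => c i s x) t
      = -(∑ j, u t x j * pd j (fun y => ∑ i, c i t y) x)
        + D * lap (fun y => ∑ i, c i t y) x
        + D * (∑ j, pd j (fun y => (∑ i, zv i * c i t y) * pd j (fun y' => Φ t y') y) x) := by
    intro x
    have := npd_sum_NP D zv (fun i y => c i t y) (fun y => Φ t y) (fun j y => u t y j)
      (fun i y => deriv (fun s => c i s y) t) hci hΦt hderiv (fun _ => 1) x
    simpa only [one_mul] using this
  -- continuity of the substituted integrands
  have cRE : Continuous fun x =>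
      (fun y => ∑ i, zv i * c i t y) x * (-(∑ j, u t x j * pd j (fun y => ∑ i, zv i * c i t y) x)
        + D * lap (fun y => ∑ i, zv i * c i t y) x
        + D * z ^ 2 * (∑ j, pd j (fun y => (∑ i, c i t y) * pd j (fun y' => Φ t y') y) x)) :=
    hR.continuous.mul
      ((((continuous_finset_sum _ fun j _ => (huj j).continuous.mul
          (pd_contDiff hR j).continuous).neg).add
        (continuous_const.mul (continuous_finset_sum _ fun j _ =>
          (pd_contDiff (pd_contDiff hR j) j).continuous))).add
       (continuous_const.mul (continuous_finset_sum _ fun j _ =>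
          (pd_contDiff (hS.mul (pd_contDiff hΦt j)) j).continuous)))
  have cSE : Continuous fun x =>
      z ^ 2 * ((fun y => ∑ i, c i t y) x * (-(∑ j, u t x j * pd j (fun y => ∑ i, c i t y) x)
        + D * lap (fun y => ∑ i, c i t y) x
        + D * (∑ j, pd j (fun y => (∑ i, zv i * c i t y) * pd j (fun y' => Φ t y') y) x))) :=
    continuous_const.mul (hS.continuous.mul
      ((((continuous_finset_sum _ fun j _ => (huj j).continuous.mul
          (pd_contDiff hS j).continuous).neg).add
        (continuous_const.mul (continuous_finset_sum _ fun j _ =>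
          (pd_contDiff (pd_contDiff hS j) j).continuous))).add
       (continuous_const.mul (continuous_finset_sum _ fun j _ =>
          (pd_contDiff (hR.mul (pd_contDiff hΦt j)) j).continuous))))
  -- now identify the derivative value with the claimed expression
  have hval : (1 / 2 : ℝ) * ((∫ x in T3, deriv (fun s => (∑ i, zv i * c i s x) ^ 2) t)
        + z ^ 2 * ∫ x in T3, deriv (fun s => (∑ i, c i s x) ^ 2) t)
      = - D * ((∫ x in T3, ∑ j, (pd j (fun y => ∑ i, zv i * c i t y) x) ^ 2)
                + z ^ 2 * (∫ x in T3, ∑ j, (pd j (fun y => ∑ i, c i t y) x) ^ 2)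
                + z ^ 2 * ∫ x in T3, (∑ i, zv i * c i t x) ^ 2 * (∑ i, c i t x))
         - D * z ^ 2 * ∫ x in T3, (∑ i, zv i * c i t x) * ρt x * (∑ i, c i t x) := by
    rw [intT3_congr hd1, intT3_congr hd2, integral_const_mul, integral_const_mul]
    have hcomb : (1 / 2 : ℝ) * (2 * (∫ x in T3, (∑ i, zv i * c i t x)
          * (∑ i, zv i * deriv (fun s => c i s x) t))
        + z ^ 2 * (2 * ∫ x in T3, (∑ i, c i t x) * (∑ i, deriv (fun s => c i s x) t)))
        = (∫ x in T3, (∑ i, zv i * c i t x) * (∑ i, zv i * deriv (fun s => c i s x) t))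
          + z ^ 2 * ∫ x in T3, (∑ i, c i t x) * (∑ i, deriv (fun s => c i s x) t) := by ring
    rw [hcomb]
    -- substitute the PDE in each integral
    rw [intT3_congr (f := fun x =>
        (∑ i, zv i * c i t x) * (∑ i, zv i * deriv (fun s => c i s x) t))
      (g := fun x =>
        (fun y => ∑ i, zv i * c i t y) x * (-(∑ j, u t x j * pd j (fun y => ∑ i, zv i * c i t y) x)
          + D * lap (fun y => ∑ i, zv i * c i t y) x
          + D * z ^ 2 * (∑ j, pd j (fun y => (∑ i, c i t y)
              * pd j (fun y' => Φ t y') y) x)))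
      (fun x => by simp only [hRt x])]
    rw [intT3_congr (f := fun x =>
        (∑ i, c i t x) * (∑ i, deriv (fun s => c i s x) t))
      (g := fun x =>
        (fun y => ∑ i, c i t y) x * (-(∑ j, u t x j * pd j (fun y => ∑ i, c i t y) x)
          + D * lap (fun y => ∑ i, c i t y) x
          + D * (∑ j, pd j (fun y => (∑ i, zv i * c i t y)
              * pd j (fun y' => Φ t y') y) x)))
      (fun x => by simp only [hSt x])]
    rw [← integral_const_mul (z ^ 2), ← integral_add (intT3 cRE) (intT3 cSE)]
    rw [npd_spatial D z (fun y => ∑ i, zv i * c i t y) (fun y => ∑ i, c i t y)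
      (fun y => Φ t y) ρt (fun j y => u t y j)
      hR hS hΦt hρt.continuous (fun j => huj j)
      hpR hpS (hΦper t) (fun j => huper t j)
      (fun x => hdivu t ht x) (fun x => hPois t ht x)]
  exact hval ▸ Hfinal


end
end

section
/- Abstract backward uniqueness (the mechanism of Theorem 6.1): Let H be a real Hilbert space, A : H → H a bounded self-adjoint linear operator with ⟨Av, v⟩ ≥ 0 for all v ∈ H, and let c > 0, T > 0. Let v : [0,T] → H be continuously differentiable and g : [0,T] → H continuous with v′(t) + cAv(t) = g(t) for all t ∈ [0,T]. Suppose ‖g(t)‖² ≤ K₁(t)‖v(t)‖² + K₂(t)⟨Av(t), v(t)⟩ for all t ∈ [0,T], where K₁, K₂ : [0,T] → [0,∞) satisfy ∫₀ᵀ (K₁(t) + K₂(t)) dt < ∞. If v(T) = 0, then v(t) = 0 for all t ∈ [0,T]. -/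
open MeasureTheory

lemma gronwall_zero (f C : ℝ → ℝ) (T : ℝ) (hT : 0 ≤ T)
    (hfcont : ContinuousOn f (Set.Icc 0 T))
    (hfnonneg : ∀ t ∈ Set.Icc (0:ℝ) T, 0 ≤ f t)
    (hCnonneg : ∀ t ∈ Set.Icc (0:ℝ) T, 0 ≤ C t)
    (hC_int : IntegrableOn C (Set.Icc 0 T))
    (hkey : ∀ t ∈ Set.Icc (0:ℝ) T, f t ≤ ∫ s in t..T, C s * f s) :
    ∀ t ∈ Set.Icc (0:ℝ) T, f t = 0 := by
  -- integrability of C * f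
  obtain ⟨M, hM⟩ : ∃ M, ∀ x ∈ Set.Icc (0:ℝ) T, ‖f x‖ ≤ M := by
    obtain ⟨M, hM⟩ := (isCompact_Icc.image_of_continuousOn hfcont.norm).bddAbove
    exact ⟨M, fun x hx => hM ⟨x, hx, rfl⟩⟩
  have hCf_int : IntegrableOn (fun s => C s * f s) (Set.Icc 0 T) := by
    have : IntegrableOn (fun s => f s * C s) (Set.Icc 0 T) := by
      refine Integrable.bdd_mul (c := M) hC_int
        (hfcont.aestronglyMeasurable measurableSet_Icc) ?_
      exact (ae_restrict_iff' measurableSet_Icc).2 (Filter.Eventually.of_forall hM)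
    simpa [mul_comm] using this
  have hII : ∀ x y : ℝ, 0 ≤ x → x ≤ y → y ≤ T →
      IntervalIntegrable (fun s => C s * f s) volume x y := by
    intro x y hx hxy hyT
    rw [intervalIntegrable_iff, Set.uIoc_of_le hxy]
    exact hCf_int.mono_set ((Set.Ioc_subset_Icc_self).trans (Set.Icc_subset_Icc hx hyT))
  have hIIC : ∀ x y : ℝ, 0 ≤ x → x ≤ y → y ≤ T →
      IntervalIntegrable C volume x y := by
    intro x y hx hxy hyT
    rw [intervalIntegrable_iff, Set.uIoc_of_le hxy]
    exact hC_int.mono_set ((Set.Ioc_subset_Icc_self).trans (Set.Icc_subset_Icc hx hyT))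
  -- choose δ
  obtain ⟨δ, hδpos, hδ⟩ : ∃ δ > (0:ℝ), ∀ a ∈ Set.Icc (0:ℝ) T, ∀ b ∈ Set.Icc (0:ℝ) T,
      a ≤ b → b - a ≤ δ → (∫ s in a..b, C s) ≤ 1/2 := by
    have hcont : ContinuousOn (fun x => ∫ s in (0:ℝ)..x, C s) (Set.Icc 0 T) := by
      have := intervalIntegral.continuousOn_primitive_interval
        (a := (0:ℝ)) (b := T) (μ := volume) (f := C) (by rwa [Set.uIcc_of_le hT])
      rwa [Set.uIcc_of_le hT] at this
    have huc := isCompact_Icc.uniformContinuousOn_of_continuous hcont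
    rw [Metric.uniformContinuousOn_iff] at huc
    obtain ⟨δ', hδ'pos, hδ'⟩ := huc (1/2) (by norm_num)
    refine ⟨δ'/2, by positivity, fun a ha b hb hab hba => ?_⟩
    have h1 : (∫ s in a..b, C s) = (∫ s in (0:ℝ)..b, C s) - ∫ s in (0:ℝ)..a, C s := by
      rw [← intervalIntegral.integral_interval_sub_left
        (hIIC 0 b le_rfl hb.1 hb.2) (hIIC 0 a le_rfl ha.1 ha.2)]
    have h2 := hδ' b hb a ha (by rw [Real.dist_eq]; rw [abs_of_nonneg (by linarith)]; linarith)
    rw [Real.dist_eq] at h2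
    have h3 := abs_le.1 h2.le
    rw [h1]
    linarith [h3.1, h3.2]
  have main : ∀ n : ℕ, ∀ t ∈ Set.Icc (0:ℝ) T, T - n * δ ≤ t → f t = 0 := by
    intro n
    induction n with
    | zero =>
      intro t ht hts
      simp only [Nat.cast_zero, zero_mul, sub_zero] at hts
      have htT : t = T := le_antisymm ht.2 hts
      subst htT
      have h1 := hkey t ht
      rw [intervalIntegral.integral_same] at h1
      exact le_antisymm h1 (hfnonneg t ht)
    | succ n ih =>
      intro t ht htn
      by_cases hcase : T - n * δ ≤ t
      · exact ih t ht hcase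
      push_neg at hcase
      set b := T - n * δ with hb
      have hb0 : 0 < b := lt_of_le_of_lt ht.1 hcase
      have hbT : b ≤ T := by
        have hnd : (0:ℝ) ≤ (n:ℝ) * δ := by positivity
        simp only [hb]
        linarith
      have hbI : b ∈ Set.Icc (0:ℝ) T := ⟨hb0.le, hbT⟩
      set a := max 0 (T - ((n:ℝ)+1) * δ) with ha
      have hat : a ≤ t := by
        apply max_le ht.1
        push_cast at htn
        linarith
      have hab : a ≤ b := le_trans hat hcase.le
      have hsub : Set.Icc a b ⊆ Set.Icc 0 T :=
        Set.Icc_subset_Icc (le_max_left _ _) hbT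
      obtain ⟨t₀, ht₀mem, ht₀max⟩ :=
        isCompact_Icc.exists_isMaxOn (Set.nonempty_Icc.2 hab) (hfcont.mono hsub)
      have ht₀I := hsub ht₀mem
      have hM0 : 0 ≤ f t₀ := hfnonneg t₀ ht₀I
      have ht₀b : t₀ ≤ b := ht₀mem.2
      have h1 : f t₀ ≤ ∫ s in t₀..T, C s * f s := hkey t₀ ht₀I
      have hsplit : (∫ s in t₀..T, C s * f s)
          = (∫ s in t₀..b, C s * f s) + ∫ s in b..T, C s * f s :=
        (intervalIntegral.integral_add_adjacent_intervals
          (hII t₀ b ht₀I.1 ht₀b hbT) (hII b T hb0.le hbT le_rfl)).symm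
      have h2 : (∫ s in b..T, C s * f s) = 0 := by
        rw [intervalIntegral.integral_congr (g := fun _ => (0:ℝ)) ?_]
        · simp
        · intro s hs
          rw [Set.uIcc_of_le hbT] at hs
          have hsI : s ∈ Set.Icc (0:ℝ) T := ⟨le_trans hb0.le hs.1, hs.2⟩
          have hfs : f s = 0 := ih s hsI hs.1
          simp [hfs]
      have h3 : (∫ s in t₀..b, C s * f s) ≤ ∫ s in t₀..b, C s * f t₀ := by
        apply intervalIntegral.integral_mono_on ht₀b (hII t₀ b ht₀I.1 ht₀b hbT)
        · exact (hIIC t₀ b ht₀I.1 ht₀b hbT).mul_const _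
        · intro s hs
          have hsab : s ∈ Set.Icc a b := ⟨le_trans ht₀mem.1 hs.1, hs.2⟩
          exact mul_le_mul_of_nonneg_left (ht₀max hsab) (hCnonneg s (hsub hsab))
      have h4 : (∫ s in t₀..b, C s * f t₀) = (∫ s in t₀..b, C s) * f t₀ :=
        intervalIntegral.integral_mul_const _ _
      have h5 : (∫ s in t₀..b, C s) ≤ 1/2 := by
        apply hδ t₀ ht₀I b hbI ht₀b
        have hta : T - ((n:ℝ)+1) * δ ≤ t₀ := le_trans (le_max_right _ _) ht₀mem.1
        simp only [hb]
        linarith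
      have h6 : (∫ s in t₀..b, C s) * f t₀ ≤ (1/2) * f t₀ :=
        mul_le_mul_of_nonneg_right h5 hM0
      have ht₀0 : f t₀ = 0 := by
        rw [hsplit, h2, add_zero] at h1
        linarith
      have htab : t ∈ Set.Icc a b := ⟨hat, hcase.le⟩
      have h7 : f t ≤ f t₀ := ht₀max htab
      have h8 := hfnonneg t ht
      linarith
  intro t ht
  obtain ⟨n, hn⟩ := exists_nat_ge (T / δ)
  have hn' : T ≤ n * δ := (div_le_iff₀ hδpos).1 hn
  exact main n t ht (by linarith [ht.1])

/-- **Abstract backward uniqueness (mechanism of Theorem 6.1).** Let `H` be a real Hilbert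
space, `A` a bounded self-adjoint nonnegative operator on `H`, `c > 0`, and let
`v : [0,T] → H` be continuously differentiable with `v′ + cAv = g`, `g` continuous,
`‖g(t)‖² ≤ K₁(t)‖v(t)‖² + K₂(t)⟨Av(t),v(t)⟩` where `K₁, K₂ ≥ 0` are integrable on
`[0,T]`. If `v(T) = 0` then `v ≡ 0` on `[0,T]`. -/
theorem abstract_backward_uniqueness
    {H : Type*} [NormedAddCommGroup H] [InnerProductSpace ℝ H] [CompleteSpace H]
    (A : H →L[ℝ] H)
    (hA_selfadj : ∀ v w : H, inner ℝ (A v) w = (inner ℝ v (A w) : ℝ))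
    (hA_nonneg : ∀ v : H, (0 : ℝ) ≤ inner ℝ (A v) v)
    (c T : ℝ) (hc : 0 < c) (hT : 0 < T)
    (v v' g : ℝ → H) (K₁ K₂ : ℝ → ℝ)
    (hv_deriv : ∀ t ∈ Set.Icc (0 : ℝ) T, HasDerivAt v (v' t) t)
    (hv'_cont : ContinuousOn v' (Set.Icc 0 T))
    (hg_cont : ContinuousOn g (Set.Icc 0 T))
    (heq : ∀ t ∈ Set.Icc (0 : ℝ) T, v' t + c • A (v t) = g t)
    (hK₁ : ∀ t ∈ Set.Icc (0 : ℝ) T, 0 ≤ K₁ t)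
    (hK₂ : ∀ t ∈ Set.Icc (0 : ℝ) T, 0 ≤ K₂ t)
    (hbound : ∀ t ∈ Set.Icc (0 : ℝ) T,
      ‖g t‖ ^ 2 ≤ K₁ t * ‖v t‖ ^ 2 + K₂ t * inner ℝ (A (v t)) (v t))
    (hK_int : IntegrableOn (fun t => K₁ t + K₂ t) (Set.Icc 0 T))
    (hvT : v T = 0) :
    ∀ t ∈ Set.Icc (0 : ℝ) T, v t = 0 := by
  set f : ℝ → ℝ := fun t => ‖v t‖ ^ 2 with hfdef
  set C : ℝ → ℝ := fun t => (K₁ t + K₂ t) * (1 + ‖A‖) + (1 + 2 * c * ‖A‖) with hCdef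
  have hvcont : ContinuousOn v (Set.Icc 0 T) :=
    fun t ht => (hv_deriv t ht).continuousAt.continuousWithinAt
  have hfcont : ContinuousOn f (Set.Icc 0 T) := (hvcont.norm).pow 2
  have hfnonneg : ∀ t ∈ Set.Icc (0:ℝ) T, 0 ≤ f t := fun t _ => sq_nonneg _
  have hCnonneg : ∀ t ∈ Set.Icc (0:ℝ) T, 0 ≤ C t := by
    intro t ht
    have h1 := hK₁ t ht
    have h2 := hK₂ t ht
    have h3 : (0:ℝ) ≤ ‖A‖ := norm_nonneg A
    have : (0:ℝ) ≤ (K₁ t + K₂ t) * (1 + ‖A‖) := by positivity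
    simp only [hCdef]
    nlinarith [hc.le, mul_nonneg hc.le h3]
  have hC_int : IntegrableOn C (Set.Icc 0 T) := by
    apply Integrable.add (hK_int.mul_const _)
    exact integrableOn_const measure_Icc_lt_top.ne
  -- derivative of f
  have hfd : ∀ t ∈ Set.Icc (0:ℝ) T,
      HasDerivAt f (2 * (inner ℝ (v' t) (v t) : ℝ)) t := by
    intro t ht
    have h := (hv_deriv t ht).inner ℝ (hv_deriv t ht)
    have heqf : f = fun t => (inner ℝ (v t) (v t) : ℝ) := by
      funext s; simp [hfdef, real_inner_self_eq_norm_sq]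
    rw [heqf]
    refine h.congr_deriv ?_
    rw [real_inner_comm]
    ring
  -- pointwise differential inequality
  have hpt : ∀ s ∈ Set.Icc (0:ℝ) T,
      -(2 * (inner ℝ (v' s) (v s) : ℝ)) ≤ C s * f s := by
    intro s hs
    have hv's : v' s = g s - c • A (v s) := by
      have := heq s hs; exact eq_sub_of_add_eq this
    have hip : (inner ℝ (v' s) (v s) : ℝ)
        = (inner ℝ (g s) (v s) : ℝ) - c * (inner ℝ (A (v s)) (v s) : ℝ) := by
      rw [hv's, inner_sub_left, real_inner_smul_left]
    have hAb : (inner ℝ (A (v s)) (v s) : ℝ) ≤ ‖A‖ * ‖v s‖ ^ 2 := by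
      calc (inner ℝ (A (v s)) (v s) : ℝ) ≤ ‖A (v s)‖ * ‖v s‖ := real_inner_le_norm _ _
        _ ≤ (‖A‖ * ‖v s‖) * ‖v s‖ :=
            mul_le_mul_of_nonneg_right (A.le_opNorm _) (norm_nonneg _)
        _ = ‖A‖ * ‖v s‖ ^ 2 := by ring
    have hA0 : (0:ℝ) ≤ (inner ℝ (A (v s)) (v s) : ℝ) := hA_nonneg _
    have hgb := hbound s hs
    have hgv : -(inner ℝ (g s) (v s) : ℝ) ≤ ‖g s‖ * ‖v s‖ := by
      have := abs_real_inner_le_norm (g s) (v s)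
      have h := neg_abs_le (inner ℝ (g s) (v s) : ℝ)
      linarith
    have hsq : (0:ℝ) ≤ (‖g s‖ - ‖v s‖) ^ 2 := sq_nonneg _
    have h1 := hK₁ s hs
    have h2 := hK₂ s hs
    have h3 : (0:ℝ) ≤ ‖A‖ := norm_nonneg A
    have p1 : c * (inner ℝ (A (v s)) (v s) : ℝ) ≤ c * (‖A‖ * ‖v s‖ ^ 2) :=
      mul_le_mul_of_nonneg_left hAb hc.le
    have p2 : K₂ s * (inner ℝ (A (v s)) (v s) : ℝ) ≤ K₂ s * (‖A‖ * ‖v s‖ ^ 2) :=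
      mul_le_mul_of_nonneg_left hAb h2
    have p3 : (0:ℝ) ≤ K₁ s * (‖A‖ * ‖v s‖ ^ 2) := by positivity
    have p4 : (0:ℝ) ≤ K₂ s * ‖v s‖ ^ 2 := by positivity
    simp only [hCdef, hfdef, hip]
    nlinarith [p1, p2, p3, p4, hgb, hgv, hsq, hA0]
  -- integrability of C * f and of the derivative
  obtain ⟨M, hM⟩ : ∃ M, ∀ x ∈ Set.Icc (0:ℝ) T, ‖f x‖ ≤ M := by
    obtain ⟨M, hM⟩ := (isCompact_Icc.image_of_continuousOn hfcont.norm).bddAbove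
    exact ⟨M, fun x hx => hM ⟨x, hx, rfl⟩⟩
  have hCf_int : IntegrableOn (fun s => C s * f s) (Set.Icc 0 T) := by
    have h : IntegrableOn (fun s => f s * C s) (Set.Icc 0 T) := by
      refine Integrable.bdd_mul (c := M) hC_int
        (hfcont.aestronglyMeasurable measurableSet_Icc) ?_
      exact (ae_restrict_iff' measurableSet_Icc).2 (Filter.Eventually.of_forall hM)
    simpa [mul_comm] using h
  have hdcont : ContinuousOn (fun s => 2 * (inner ℝ (v' s) (v s) : ℝ)) (Set.Icc 0 T) :=
    continuousOn_const.mul (hv'_cont.inner hvcont)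
  -- the key integral inequality
  have hkey : ∀ t ∈ Set.Icc (0:ℝ) T, f t ≤ ∫ s in t..T, C s * f s := by
    intro t ht
    have hsub : Set.uIcc t T ⊆ Set.Icc 0 T := by
      rw [Set.uIcc_of_le ht.2]
      exact Set.Icc_subset_Icc ht.1 le_rfl
    have hd_ii : IntervalIntegrable (fun s => 2 * (inner ℝ (v' s) (v s) : ℝ)) volume t T :=
      (hdcont.mono hsub).intervalIntegrable
    have hftc : (∫ s in t..T, 2 * (inner ℝ (v' s) (v s) : ℝ)) = f T - f t :=
      intervalIntegral.integral_eq_sub_of_hasDerivAt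
        (fun s hs => hfd s (hsub hs)) hd_ii
    have hfT : f T = 0 := by simp [hfdef, hvT]
    have hCf_ii : IntervalIntegrable (fun s => C s * f s) volume t T := by
      rw [intervalIntegrable_iff, Set.uIoc_of_le ht.2]
      exact hCf_int.mono_set
        ((Set.Ioc_subset_Icc_self).trans (Set.Icc_subset_Icc ht.1 le_rfl))
    have hmono : (∫ s in t..T, -(2 * (inner ℝ (v' s) (v s) : ℝ)))
        ≤ ∫ s in t..T, C s * f s := by
      apply intervalIntegral.integral_mono_on ht.2 hd_ii.neg hCf_ii
      intro s hs
      exact hpt s (hsub (Set.mem_uIcc_of_le hs.1 hs.2))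
    rw [intervalIntegral.integral_neg, hftc, hfT] at hmono
    linarith
  -- conclude via the Gronwall lemma
  intro t ht
  have := gronwall_zero f C T hT.le hfcont hfnonneg hCnonneg hC_int hkey t ht
  simpa [hfdef, pow_eq_zero_iff, norm_eq_zero] using this
end
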